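/- arXiv:1910.05913 — 12 statements merged into one kernel-verified Lean document; each statement's English description precedes it below -/
import Mathlib

section
/- If x* ∈ Opt bu, then x* ∈ Ω, and for every scenario b with bl ≤ b ≤ bu and every x ∈ Opt b one has c ⬝ᵥ x* ≤ c ⬝ᵥ x. (Hence the best optimal value z̲ = inf over b ∈ Set.Icc bl bu of the optimal value z(b) is attained and equals the optimal value of the single LP with right-hand side bu.) -/
open Matrix

/-- Feasible set of the scenario LP: `A x ≤ b`, `x ≥ 0`. -/
def Feas {m n : ℕ} (A : Matrix (Fin m) (Fin n) ℝ) (b : Fin m → ℝ) :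
    Set (Fin n → ℝ) :=
  {x | A.mulVec x ≤ b ∧ 0 ≤ x}

/-- Optimal set of the scenario LP `min c ⬝ᵥ x` over `Feas A b`. -/
def Opt {m n : ℕ} (A : Matrix (Fin m) (Fin n) ℝ) (c : Fin n → ℝ)
    (b : Fin m → ℝ) : Set (Fin n → ℝ) :=
  {x ∈ Feas A b | ∀ y ∈ Feas A b, c ⬝ᵥ x ≤ c ⬝ᵥ y}

/-- Optimal set of the interval LP: union of scenario optimal sets. -/
def Omega {m n : ℕ} (A : Matrix (Fin m) (Fin n) ℝ) (c : Fin n → ℝ)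
    (bl bu : Fin m → ℝ) : Set (Fin n → ℝ) :=
  ⋃ b ∈ Set.Icc bl bu, Opt A c b

theorem best_optimal_value_attained_at_upper_rhs
    (m n : ℕ) (A : Matrix (Fin m) (Fin n) ℝ) (c r : Fin n → ℝ)
    (bl bu : Fin m → ℝ) (hb : bl ≤ bu)
    (xstar : Fin n → ℝ) (hxstar : xstar ∈ Opt A c bu) :
    xstar ∈ Omega A c bl bu ∧
      ∀ b ∈ Set.Icc bl bu, ∀ x ∈ Opt A c b, c ⬝ᵥ xstar ≤ c ⬝ᵥ x := by
  constructor
  · exact Set.mem_biUnion (Set.mem_Icc.mpr ⟨hb, le_refl bu⟩) hxstar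
  · rintro b ⟨_, hbu⟩ x ⟨⟨hAx, hx0⟩, _⟩
    exact hxstar.2 x ⟨le_trans hAx hbu, hx0⟩
end

section
/- If x* ∈ Opt bl, then x* ∈ Ω, and for every scenario b with bl ≤ b ≤ bu and every x ∈ Opt b one has c ⬝ᵥ x ≤ c ⬝ᵥ x*. (Hence the worst optimal value z̄ = sup over b ∈ Set.Icc bl bu of the optimal value z(b) is attained and equals the optimal value of the single LP with right-hand side bl.) -/
open Matrix

theorem worst_optimal_value_attained_at_lower_rhs
    (m n : ℕ) (A : Matrix (Fin m) (Fin n) ℝ) (c r : Fin n → ℝ)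
    (bl bu : Fin m → ℝ) (hb : bl ≤ bu)
    (xstar : Fin n → ℝ) (hxstar : xstar ∈ Opt A c bl) :
    xstar ∈ Omega A c bl bu ∧
      ∀ b ∈ Set.Icc bl bu, ∀ x ∈ Opt A c b, c ⬝ᵥ x ≤ c ⬝ᵥ xstar := by
  obtain ⟨⟨hAx, hx0⟩, hopt⟩ := hxstar
  refine ⟨Set.mem_biUnion ⟨le_refl bl, hb⟩ ⟨⟨hAx, hx0⟩, hopt⟩, ?_⟩
  rintro b ⟨hbl, _⟩ x ⟨_, hxopt⟩
  exact hxopt xstar ⟨le_trans hAx hbl, hx0⟩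
end

section
/- Assume hypothesis (H). Then for every x* ∈ Opt bu and every x ∈ Ω, r ⬝ᵥ x* ≤ r ⬝ᵥ x. (Hence the minimum outcome value f̲ over Ω equals the optimal value of the single linear program min r ⬝ᵥ x subject to A.mulVec x ≤ bu, 0 ≤ x, and the outcome minimization reduces to one LP.) -/
open Matrix

theorem outcome_min_reduces_to_upper_rhs_LP
    (m n : ℕ) (A : Matrix (Fin m) (Fin n) ℝ) (c r : Fin n → ℝ)
    (bl bu : Fin m → ℝ) (hb : bl ≤ bu)
    (hH : ∀ b ∈ Set.Icc bl bu, ∀ x ∈ Opt A c b, ∀ y ∈ Feas A b,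
      r ⬝ᵥ x ≤ r ⬝ᵥ y) :
    ∀ xstar ∈ Opt A c bu, ∀ x ∈ Omega A c bl bu, r ⬝ᵥ xstar ≤ r ⬝ᵥ x := by
  intro xstar hxstar x hx
  obtain ⟨S, ⟨b, rfl⟩, hS⟩ := hx
  simp only [Set.mem_iUnion] at hS
  obtain ⟨hbIcc, hxOpt⟩ := hS
  have hxFeas : x ∈ Feas A bu :=
    ⟨le_trans hxOpt.1.1 hbIcc.2, hxOpt.1.2⟩
  exact hH bu ⟨hb, le_refl bu⟩ xstar hxstar x hxFeas
end

section
/- Suppose the interval LP is unique B-stable with basis β. Then the set of all optimal solutions over all scenarios in standard form is exactly the polyhedron described by the basis: ⋃ b ∈ Set.Icc bl bu, OptStd b = {x̃ : Fin n ⊕ Fin m → ℝ | 0 ≤ x̃ ∧ (∀ j ∉ Set.range β, x̃ j = 0) ∧ bl ≤ Ãβ.mulVec (fun i => x̃ (β i)) ∧ Ãβ.mulVec (fun i => x̃ (β i)) ≤ bu}. -/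
open Matrix

/-- Standard-form coefficient matrix with appended slack variables. -/
def Atil {m n : ℕ} (A : Matrix (Fin m) (Fin n) ℝ) :
    Matrix (Fin m) (Fin n ⊕ Fin m) ℝ :=
  Matrix.fromCols A 1

/-- Standard-form feasible set: `Ã x̃ = b`, `x̃ ≥ 0`. -/
def FeasStd {m n : ℕ} (A : Matrix (Fin m) (Fin n) ℝ) (b : Fin m → ℝ) :
    Set (Fin n ⊕ Fin m → ℝ) :=
  {xt | (Atil A).mulVec xt = b ∧ 0 ≤ xt}

/-- Standard-form optimal set for the objective `c̃ = Sum.elim c 0`. -/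
def OptStd {m n : ℕ} (A : Matrix (Fin m) (Fin n) ℝ) (c : Fin n → ℝ)
    (b : Fin m → ℝ) : Set (Fin n ⊕ Fin m → ℝ) :=
  {xt ∈ FeasStd A b |
    ∀ yt ∈ FeasStd A b, Sum.elim c 0 ⬝ᵥ xt ≤ Sum.elim c 0 ⬝ᵥ yt}

/-! Every optimal solution of a scenario `b` is the basic solution `xβ b`, whose basic part is
`Ãβ⁻¹ b`, so `Ãβ` maps it back to `b ∈ [bl, bu]`. Conversely, a vector `x` supported on the
basis is the basic solution for `b := Ãβ (x ∘ β)`; if `b ∈ [bl, bu]` then `x = xβ b` is optimal. -/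

theorem Matrix.mulVec_inv_mulVec_of_isUnit_det {ι R : Type*} [Fintype ι] [DecidableEq ι]
    [CommRing R] {B : Matrix ι ι R} (hB : IsUnit B.det) (b : ι → R) :
    B *ᵥ (B⁻¹ *ᵥ b) = b := by
  rw [mulVec_mulVec, mul_nonsing_inv B hB, one_mulVec]

theorem Matrix.inv_mulVec_mulVec_of_isUnit_det {ι R : Type*} [Fintype ι] [DecidableEq ι]
    [CommRing R] {B : Matrix ι ι R} (hB : IsUnit B.det) (v : ι → R) :
    B⁻¹ *ᵥ (B *ᵥ v) = v := by
  rw [mulVec_mulVec, nonsing_inv_mul B hB, one_mulVec]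

theorem eq_of_comp_eq_of_eq_zero_off_range {ι κ M : Type*} [Zero M] {β : ι → κ}
    {x y : κ → M} (hβ : x ∘ β = y ∘ β) (hx : ∀ j ∉ Set.range β, x j = 0)
    (hy : ∀ j ∉ Set.range β, y j = 0) : x = y := by
  funext j
  by_cases hj : j ∈ Set.range β
  · exact Set.eqOn_range.mpr hβ hj
  · rw [hx j hj, hy j hj]

theorem unique_B_stable_optimal_set_description_general
    (m n : ℕ) (A : Matrix (Fin m) (Fin n) ℝ) (c : Fin n → ℝ)
    (bl bu : Fin m → ℝ)
    (β : Fin m → Fin n ⊕ Fin m)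
    (hβinv : IsUnit ((Atil A).submatrix id β).det)
    (xβ : (Fin m → ℝ) → (Fin n ⊕ Fin m → ℝ))
    (hxβ_basic : ∀ b : Fin m → ℝ, ∀ i : Fin m,
      xβ b (β i) = (((Atil A).submatrix id β)⁻¹.mulVec b) i)
    (hxβ_nonbasic : ∀ b : Fin m → ℝ, ∀ j : Fin n ⊕ Fin m,
      j ∉ Set.range β → xβ b j = 0)
    (hBstable : ∀ b ∈ Set.Icc bl bu, OptStd A c b = {xβ b}) :
    (⋃ b ∈ Set.Icc bl bu, OptStd A c b) =
      {xt : Fin n ⊕ Fin m → ℝ | 0 ≤ xt ∧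
        (∀ j ∉ Set.range β, xt j = 0) ∧
        bl ≤ ((Atil A).submatrix id β).mulVec (fun i => xt (β i)) ∧
        ((Atil A).submatrix id β).mulVec (fun i => xt (β i)) ≤ bu} := by
  have hbasic (b : Fin m → ℝ) : xβ b ∘ β = ((Atil A).submatrix id β)⁻¹ *ᵥ b :=
    funext (hxβ_basic b)
  ext x
  simp only [Set.mem_iUnion, Set.mem_ofPred_eq, exists_prop]
  constructor
  · rintro ⟨b, hb, hx⟩
    have hopt : xβ b ∈ OptStd A c b := (hBstable b hb).symm ▸ Set.mem_singleton (xβ b)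
    rw [hBstable b hb, Set.mem_singleton_iff] at hx
    subst hx
    have hB : (Atil A).submatrix id β *ᵥ (xβ b ∘ β) = b := by
      rw [hbasic, mulVec_inv_mulVec_of_isUnit_det hβinv]
    exact ⟨hopt.1.2, hxβ_nonbasic b, by rw [← hB] at hb; exact hb⟩
  · rintro ⟨-, hsupp, hl, hu⟩
    refine ⟨_, ⟨hl, hu⟩, ?_⟩
    rw [hBstable _ ⟨hl, hu⟩, Set.mem_singleton_iff]
    refine eq_of_comp_eq_of_eq_zero_off_range ?_ hsupp (hxβ_nonbasic _)
    rw [hbasic, inv_mulVec_mulVec_of_isUnit_det hβinv]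
    rfl

theorem unique_B_stable_optimal_set_description
    (m n : ℕ) (A : Matrix (Fin m) (Fin n) ℝ) (c : Fin n → ℝ)
    (bl bu : Fin m → ℝ) (hb : bl ≤ bu)
    (β : Fin m → Fin n ⊕ Fin m) (hβinj : Function.Injective β)
    (hβinv : IsUnit ((Atil A).submatrix id β).det)
    (xβ : (Fin m → ℝ) → (Fin n ⊕ Fin m → ℝ))
    (hxβ_basic : ∀ b : Fin m → ℝ, ∀ i : Fin m,
      xβ b (β i) = (((Atil A).submatrix id β)⁻¹.mulVec b) i)
    (hxβ_nonbasic : ∀ b : Fin m → ℝ, ∀ j : Fin n ⊕ Fin m,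
      j ∉ Set.range β → xβ b j = 0)
    (hBstable : ∀ b ∈ Set.Icc bl bu, OptStd A c b = {xβ b}) :
    (⋃ b ∈ Set.Icc bl bu, OptStd A c b) =
      {xt : Fin n ⊕ Fin m → ℝ | 0 ≤ xt ∧
        (∀ j ∉ Set.range β, xt j = 0) ∧
        bl ≤ ((Atil A).submatrix id β).mulVec (fun i => xt (β i)) ∧
        ((Atil A).submatrix id β).mulVec (fun i => xt (β i)) ≤ bu} :=
  unique_B_stable_optimal_set_description_general m n A c bl bu β hβinv xβ hxβ_basic hxβ_nonbasic
    hBstable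
end

section
/- Suppose the interval LP is unique B-stable with basis β, and let r̃ := Sum.elim r 0. Then a point x̃* minimizes r̃ ⬝ᵥ over the union ⋃ b ∈ Set.Icc bl bu, OptStd b if and only if x̃* minimizes r̃ ⬝ᵥ over the polyhedron {x̃ | 0 ≤ x̃ ∧ (∀ j ∉ Set.range β, x̃ j = 0) ∧ bl ≤ Ãβ.mulVec (fun i => x̃ (β i)) ∧ Ãβ.mulVec (fun i => x̃ (β i)) ≤ bu}; in particular the minimum outcome value f̲ equals the optimal value of this single linear program. -/
open Matrix

/-!
Under unique B-stability every optimal solution for a right-hand side `b` in the box is the basic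
solution `xβ b`, whose basic part `Ãβ⁻¹ b` satisfies `Ãβ xβ(b)_β = b`; conversely a nonnegative
vector supported on the basis is the basic solution for `b := Ãβ x_β`. Hence the union of the
optimal sets is exactly the feasible set of the single LP, and minimizing `r̃ ⬝ᵥ ·` over either
set is the same problem.
-/

section BasicSolution

variable {ι κ K : Type*} [Fintype ι] [DecidableEq ι] [CommRing K]
  {B : Matrix ι ι K} {β : ι → κ} {xβ : (ι → K) → κ → K}

theorem mulVec_basicPart_eq (hB : IsUnit B.det)
    (hbasic : ∀ b i, xβ b (β i) = (B⁻¹ *ᵥ b) i) (b : ι → K) :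
    B *ᵥ (fun i => xβ b (β i)) = b := by
  have hpart : (fun i => xβ b (β i)) = B⁻¹ *ᵥ b := funext (hbasic b)
  rw [hpart, mulVec_mulVec, mul_nonsing_inv B hB, one_mulVec]

theorem basicSolution_mulVec_eq_self (hB : IsUnit B.det)
    (hbasic : ∀ b i, xβ b (β i) = (B⁻¹ *ᵥ b) i)
    (hnonbasic : ∀ b, ∀ j ∉ Set.range β, xβ b j = 0)
    {x : κ → K} (hx : ∀ j ∉ Set.range β, x j = 0) :
    xβ (B *ᵥ (fun i => x (β i))) = x := by
  funext j
  by_cases hj : j ∈ Set.range β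
  · obtain ⟨i, rfl⟩ := hj
    rw [hbasic, mulVec_mulVec, nonsing_inv_mul B hB, one_mulVec]
  · rw [hnonbasic _ _ hj, hx j hj]

end BasicSolution

def basisBoxFeasible {m n : ℕ} (A : Matrix (Fin m) (Fin n) ℝ) (β : Fin m → Fin n ⊕ Fin m)
    (bl bu : Fin m → ℝ) : Set (Fin n ⊕ Fin m → ℝ) :=
  {xt | 0 ≤ xt ∧ (∀ j ∉ Set.range β, xt j = 0) ∧
    bl ≤ ((Atil A).submatrix id β).mulVec (fun i => xt (β i)) ∧
    ((Atil A).submatrix id β).mulVec (fun i => xt (β i)) ≤ bu}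

theorem iUnion_optStd_eq_basisBoxFeasible {m n : ℕ} {A : Matrix (Fin m) (Fin n) ℝ}
    {c : Fin n → ℝ} {bl bu : Fin m → ℝ} {β : Fin m → Fin n ⊕ Fin m}
    (hB : IsUnit ((Atil A).submatrix id β).det) {xβ : (Fin m → ℝ) → (Fin n ⊕ Fin m → ℝ)}
    (hbasic : ∀ b i, xβ b (β i) = (((Atil A).submatrix id β)⁻¹ *ᵥ b) i)
    (hnonbasic : ∀ b, ∀ j ∉ Set.range β, xβ b j = 0)
    (hBstable : ∀ b ∈ Set.Icc bl bu, OptStd A c b = {xβ b}) :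
    ⋃ b ∈ Set.Icc bl bu, OptStd A c b = basisBoxFeasible A β bl bu := by
  ext xt
  simp only [Set.mem_iUnion, exists_prop]
  constructor
  · rintro ⟨b, hbox, hopt⟩
    have hnonneg : 0 ≤ xβ b := by
      have hmem : xβ b ∈ OptStd A c b := hBstable b hbox ▸ rfl
      exact hmem.1.2
    rw [hBstable b hbox, Set.mem_singleton_iff] at hopt
    subst hopt
    have hrhs := mulVec_basicPart_eq hB hbasic b
    exact ⟨hnonneg, hnonbasic b, hrhs.symm ▸ hbox.1, hrhs.symm ▸ hbox.2⟩
  · rintro ⟨-, hsupp, hlo, hhi⟩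
    refine ⟨_, ⟨hlo, hhi⟩, ?_⟩
    rw [hBstable _ ⟨hlo, hhi⟩, basicSolution_mulVec_eq_self hB hbasic hnonbasic hsupp]
    rfl

theorem unique_B_stable_outcome_min_via_single_LP_general
    (m n : ℕ) (A : Matrix (Fin m) (Fin n) ℝ) (c r : Fin n → ℝ)
    (bl bu : Fin m → ℝ)
    (β : Fin m → Fin n ⊕ Fin m)
    (hβinv : IsUnit ((Atil A).submatrix id β).det)
    (xβ : (Fin m → ℝ) → (Fin n ⊕ Fin m → ℝ))
    (hxβ_basic : ∀ b : Fin m → ℝ, ∀ i : Fin m,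
      xβ b (β i) = (((Atil A).submatrix id β)⁻¹.mulVec b) i)
    (hxβ_nonbasic : ∀ b : Fin m → ℝ, ∀ j : Fin n ⊕ Fin m,
      j ∉ Set.range β → xβ b j = 0)
    (hBstable : ∀ b ∈ Set.Icc bl bu, OptStd A c b = {xβ b})
    (xstar : Fin n ⊕ Fin m → ℝ) :
    (xstar ∈ (⋃ b ∈ Set.Icc bl bu, OptStd A c b) ∧
      ∀ yt ∈ (⋃ b ∈ Set.Icc bl bu, OptStd A c b),
        Sum.elim r 0 ⬝ᵥ xstar ≤ Sum.elim r 0 ⬝ᵥ yt) ↔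
    (xstar ∈ {xt : Fin n ⊕ Fin m → ℝ | 0 ≤ xt ∧
        (∀ j ∉ Set.range β, xt j = 0) ∧
        bl ≤ ((Atil A).submatrix id β).mulVec (fun i => xt (β i)) ∧
        ((Atil A).submatrix id β).mulVec (fun i => xt (β i)) ≤ bu} ∧
      ∀ yt ∈ {xt : Fin n ⊕ Fin m → ℝ | 0 ≤ xt ∧
        (∀ j ∉ Set.range β, xt j = 0) ∧
        bl ≤ ((Atil A).submatrix id β).mulVec (fun i => xt (β i)) ∧
        ((Atil A).submatrix id β).mulVec (fun i => xt (β i)) ≤ bu},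
        Sum.elim r 0 ⬝ᵥ xstar ≤ Sum.elim r 0 ⬝ᵥ yt) := by
  rw [iUnion_optStd_eq_basisBoxFeasible hβinv hxβ_basic hxβ_nonbasic hBstable]
  rfl

theorem unique_B_stable_outcome_min_via_single_LP
    (m n : ℕ) (A : Matrix (Fin m) (Fin n) ℝ) (c r : Fin n → ℝ)
    (bl bu : Fin m → ℝ) (hb : bl ≤ bu)
    (β : Fin m → Fin n ⊕ Fin m) (hβinj : Function.Injective β)
    (hβinv : IsUnit ((Atil A).submatrix id β).det)
    (xβ : (Fin m → ℝ) → (Fin n ⊕ Fin m → ℝ))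
    (hxβ_basic : ∀ b : Fin m → ℝ, ∀ i : Fin m,
      xβ b (β i) = (((Atil A).submatrix id β)⁻¹.mulVec b) i)
    (hxβ_nonbasic : ∀ b : Fin m → ℝ, ∀ j : Fin n ⊕ Fin m,
      j ∉ Set.range β → xβ b j = 0)
    (hBstable : ∀ b ∈ Set.Icc bl bu, OptStd A c b = {xβ b})
    (xstar : Fin n ⊕ Fin m → ℝ) :
    (xstar ∈ (⋃ b ∈ Set.Icc bl bu, OptStd A c b) ∧
      ∀ yt ∈ (⋃ b ∈ Set.Icc bl bu, OptStd A c b),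
        Sum.elim r 0 ⬝ᵥ xstar ≤ Sum.elim r 0 ⬝ᵥ yt) ↔
    (xstar ∈ {xt : Fin n ⊕ Fin m → ℝ | 0 ≤ xt ∧
        (∀ j ∉ Set.range β, xt j = 0) ∧
        bl ≤ ((Atil A).submatrix id β).mulVec (fun i => xt (β i)) ∧
        ((Atil A).submatrix id β).mulVec (fun i => xt (β i)) ≤ bu} ∧
      ∀ yt ∈ {xt : Fin n ⊕ Fin m → ℝ | 0 ≤ xt ∧
        (∀ j ∉ Set.range β, xt j = 0) ∧
        bl ≤ ((Atil A).submatrix id β).mulVec (fun i => xt (β i)) ∧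
        ((Atil A).submatrix id β).mulVec (fun i => xt (β i)) ≤ bu},
        Sum.elim r 0 ⬝ᵥ xstar ≤ Sum.elim r 0 ⬝ᵥ yt) :=
  unique_B_stable_outcome_min_via_single_LP_general m n A c r bl bu β hβinv xβ hxβ_basic
    hxβ_nonbasic hBstable xstar
end

section
/- Assume the zero vector does not lie in the interval box, i.e., ¬(bl ≤ 0 ∧ 0 ≤ bu), and assume the minimum of the outcome function over Ω is attained: there exist b⁰ ∈ Set.Icc bl bu and x⁰ ∈ Opt b⁰ with r ⬝ᵥ x⁰ ≤ r ⬝ᵥ x for all x ∈ Ω. Then there exists a weakly extremal optimal scenario: some b* ∈ Set.Icc bl bu with b* i = bl i or b* i = bu i for some index i, and some x* ∈ Opt b* such that r ⬝ᵥ x* ≤ r ⬝ᵥ x for all x ∈ Ω. -/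
open Matrix

lemma opt_smul {m n : ℕ} (A : Matrix (Fin m) (Fin n) ℝ) (c : Fin n → ℝ)
    (b : Fin m → ℝ) (t : ℝ) (ht : 0 < t) {x : Fin n → ℝ} (hx : x ∈ Opt A c b) :
    t • x ∈ Opt A c (t • b) := by
  obtain ⟨⟨hfeas, hpos⟩, hopt⟩ := hx
  refine ⟨⟨?_, ?_⟩, ?_⟩
  · rw [Matrix.mulVec_smul]
    intro i
    simp only [Pi.smul_apply, smul_eq_mul]
    exact mul_le_mul_of_nonneg_left (hfeas i) ht.le
  · intro i
    simp only [Pi.smul_apply, smul_eq_mul, Pi.zero_apply]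
    exact mul_nonneg ht.le (hpos i)
  · rintro y ⟨hyf, hyp⟩
    have h1 : t⁻¹ • y ∈ Feas A b := by
      constructor
      · rw [Matrix.mulVec_smul]
        intro i
        simp only [Pi.smul_apply, smul_eq_mul]
        have := mul_le_mul_of_nonneg_left (hyf i) (inv_nonneg.mpr ht.le)
        simpa [Pi.smul_apply, smul_eq_mul, ← mul_assoc, inv_mul_cancel₀ ht.ne'] using this
      · intro i
        simp only [Pi.smul_apply, smul_eq_mul, Pi.zero_apply]
        exact mul_nonneg (inv_nonneg.mpr ht.le) (hyp i)
    have h2 := hopt _ h1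
    rw [dotProduct_smul, smul_eq_mul] at h2
    rw [dotProduct_smul, smul_eq_mul]
    rw [le_inv_mul_iff₀ ht] at h2
    linarith

theorem exists_weakly_extremal_optimal_scenario_of_zero_not_in_box
    (m n : ℕ) (A : Matrix (Fin m) (Fin n) ℝ) (c r : Fin n → ℝ)
    (bl bu : Fin m → ℝ) (hb : bl ≤ bu)
    (hzero : ¬ (bl ≤ 0 ∧ 0 ≤ bu))
    (hattained : ∃ b0 ∈ Set.Icc bl bu, ∃ x0 ∈ Opt A c b0,
      ∀ x ∈ Omega A c bl bu, r ⬝ᵥ x0 ≤ r ⬝ᵥ x) :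
    ∃ bstar ∈ Set.Icc bl bu,
      (∃ i : Fin m, bstar i = bl i ∨ bstar i = bu i) ∧
      ∃ xstar ∈ Opt A c bstar,
        ∀ x ∈ Omega A c bl bu, r ⬝ᵥ xstar ≤ r ⬝ᵥ x := by
  obtain ⟨b0, hb0, x0, hx0, hmin⟩ := hattained
  obtain ⟨hb0l, hb0u⟩ := hb0
  have hi0 : ∃ i : Fin m, 0 < bl i ∨ bu i < 0 := by
    by_contra h
    push_neg at h
    exact hzero ⟨fun i => (h i).1, fun i => (h i).2⟩
  obtain ⟨i0, hi0⟩ := hi0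
  rcases le_or_gt (r ⬝ᵥ x0) 0 with hr | hr
  · -- scale up: t ≥ 1
    set S : Finset (Fin m) := Finset.univ.filter (fun i => b0 i ≠ 0) with hS
    have hi0S : i0 ∈ S := by
      simp only [hS, Finset.mem_filter, Finset.mem_univ, true_and]
      rcases hi0 with h | h
      · exact ne_of_gt (lt_of_lt_of_le h (hb0l i0))
      · exact ne_of_lt (lt_of_le_of_lt (hb0u i0) h)
    have hSne : S.Nonempty := ⟨i0, hi0S⟩
    set f : Fin m → ℝ := fun i => if 0 < b0 i then bu i / b0 i else bl i / b0 i with hf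
    set t : ℝ := S.inf' hSne f with htdef
    have hf1 : ∀ i ∈ S, 1 ≤ f i := by
      intro i hiS
      have hne : b0 i ≠ 0 := by simpa [hS] using hiS
      rcases lt_or_gt_of_ne hne with hneg | hpos
      · simp only [hf, if_neg (not_lt.mpr hneg.le)]
        rw [le_div_iff_of_neg hneg]
        simpa using hb0l i
      · simp only [hf, if_pos hpos]
        rw [le_div_iff₀ hpos]
        simpa using hb0u i
    have ht1 : 1 ≤ t := Finset.le_inf' hSne f hf1
    have ht0 : 0 < t := lt_of_lt_of_le one_pos ht1
    -- box membership of t • b0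
    have hbox : t • b0 ∈ Set.Icc bl bu := by
      constructor
      · intro j
        simp only [Pi.smul_apply, smul_eq_mul]
        rcases lt_trichotomy (b0 j) 0 with hneg | hz | hpos
        · have hjS : j ∈ S := by simp [hS, ne_of_lt hneg]
          have hle : t ≤ f j := Finset.inf'_le f hjS
          have hfj : f j = bl j / b0 j := by simp [hf, not_lt.mpr hneg.le]
          have hcan : (bl j / b0 j) * b0 j = bl j := div_mul_cancel₀ _ (ne_of_lt hneg)
          nlinarith [hle, hcan]
        · have := hb0l j; rw [hz] at this; simpa [hz] using this
        · have := hb0l j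
          nlinarith
      · intro j
        simp only [Pi.smul_apply, smul_eq_mul]
        rcases lt_trichotomy (b0 j) 0 with hneg | hz | hpos
        · have := hb0u j
          nlinarith
        · have := hb0u j; rw [hz] at this; simpa [hz] using this
        · have hjS : j ∈ S := by simp [hS, ne_of_gt hpos]
          have hle : t ≤ f j := Finset.inf'_le f hjS
          have hfj : f j = bu j / b0 j := by simp [hf, hpos]
          have hcan : (bu j / b0 j) * b0 j = bu j := div_mul_cancel₀ _ (ne_of_gt hpos)
          nlinarith [hle, hcan]
    refine ⟨t • b0, hbox, ?_, t • x0, opt_smul A c b0 t ht0 hx0, ?_⟩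
    · obtain ⟨i, hiS, hieq⟩ := Finset.exists_mem_eq_inf' hSne f
      refine ⟨i, ?_⟩
      have hne : b0 i ≠ 0 := by simpa [hS] using hiS
      rcases lt_or_gt_of_ne hne with hneg | hpos
      · left
        have hfi : f i = bl i / b0 i := by simp [hf, not_lt.mpr hneg.le]
        simp only [Pi.smul_apply, smul_eq_mul, htdef, hieq, hfi]
        exact div_mul_cancel₀ _ hne
      · right
        have hfi : f i = bu i / b0 i := by simp [hf, hpos]
        simp only [Pi.smul_apply, smul_eq_mul, htdef, hieq, hfi]
        exact div_mul_cancel₀ _ hne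
    · intro x hx
      have h1 := hmin x hx
      rw [dotProduct_smul, smul_eq_mul]
      nlinarith
  · -- scale down: 0 < t ≤ 1
    set S : Finset (Fin m) := Finset.univ.filter (fun i => 0 < bl i ∨ bu i < 0) with hS
    have hi0S : i0 ∈ S := by simp [hS, hi0]
    have hSne : S.Nonempty := ⟨i0, hi0S⟩
    set f : Fin m → ℝ := fun i => if 0 < bl i then bl i / b0 i else bu i / b0 i with hf
    set t : ℝ := S.sup' hSne f with htdef
    have hfprop : ∀ i ∈ S, 0 < f i ∧ f i ≤ 1 := by
      intro i hiS
      have hcond : 0 < bl i ∨ bu i < 0 := by simpa [hS] using hiS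
      rcases hcond with h | h
      · have hpos : 0 < b0 i := lt_of_lt_of_le h (hb0l i)
        simp only [hf, if_pos h]
        constructor
        · exact div_pos h hpos
        · rw [div_le_one hpos]; exact hb0l i
      · have hneg : b0 i < 0 := lt_of_le_of_lt (hb0u i) h
        have hblneg : ¬ 0 < bl i := not_lt.mpr (le_trans (le_trans (hb0l i) (hb0u i)) h.le)
        simp only [hf, if_neg hblneg]
        constructor
        · exact div_pos_of_neg_of_neg h hneg
        · rw [div_le_one_of_neg hneg]; exact hb0u i
    have ht1 : t ≤ 1 := Finset.sup'_le hSne f (fun i hi => (hfprop i hi).2)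
    have ht0 : 0 < t := lt_of_lt_of_le (hfprop i0 hi0S).1 (Finset.le_sup' f hi0S)
    have hbox : t • b0 ∈ Set.Icc bl bu := by
      constructor
      · intro j
        simp only [Pi.smul_apply, smul_eq_mul]
        rcases lt_trichotomy (b0 j) 0 with hneg | hz | hpos
        · have := hb0l j
          nlinarith
        · have := hb0l j; rw [hz] at this; simpa [hz] using this
        · rcases le_or_gt (bl j) 0 with hbl | hbl
          · nlinarith
          · have hjS : j ∈ S := by simp [hS, hbl]
            have hle : f j ≤ t := Finset.le_sup' f hjS
            have hfj : f j = bl j / b0 j := by simp [hf, hbl]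
            have hcan : (bl j / b0 j) * b0 j = bl j := div_mul_cancel₀ _ (ne_of_gt hpos)
            nlinarith [hle, hcan]
      · intro j
        simp only [Pi.smul_apply, smul_eq_mul]
        rcases lt_trichotomy (b0 j) 0 with hneg | hz | hpos
        · rcases le_or_gt 0 (bu j) with hbu | hbu
          · nlinarith
          · have hjS : j ∈ S := by simp [hS, hbu]
            have hle : f j ≤ t := Finset.le_sup' f hjS
            have hblneg : ¬ 0 < bl j := not_lt.mpr (le_trans (le_trans (hb0l j) (hb0u j)) hbu.le)
            have hfj : f j = bu j / b0 j := by simp [hf, hblneg]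
            have hcan : (bu j / b0 j) * b0 j = bu j := div_mul_cancel₀ _ (ne_of_lt hneg)
            nlinarith [hle, hcan]
        · have := hb0u j; rw [hz] at this; simpa [hz] using this
        · have := hb0u j
          nlinarith
    refine ⟨t • b0, hbox, ?_, t • x0, opt_smul A c b0 t ht0 hx0, ?_⟩
    · obtain ⟨i, hiS, hieq⟩ := Finset.exists_mem_eq_sup' hSne f
      refine ⟨i, ?_⟩
      have hcond : 0 < bl i ∨ bu i < 0 := by simpa [hS] using hiS
      rcases hcond with h | h
      · left
        have hpos : 0 < b0 i := lt_of_lt_of_le h (hb0l i)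
        have hfi : f i = bl i / b0 i := by simp [hf, h]
        simp only [Pi.smul_apply, smul_eq_mul, htdef, hieq, hfi]
        exact div_mul_cancel₀ _ (ne_of_gt hpos)
      · right
        have hneg : b0 i < 0 := lt_of_le_of_lt (hb0u i) h
        have hblneg : ¬ 0 < bl i := not_lt.mpr (le_trans (le_trans (hb0l i) (hb0u i)) h.le)
        have hfi : f i = bu i / b0 i := by simp [hf, hblneg]
        simp only [Pi.smul_apply, smul_eq_mul, htdef, hieq, hfi]
        exact div_mul_cancel₀ _ (ne_of_lt hneg)
    · intro x hx
      have h1 := hmin x hx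
      rw [dotProduct_smul, smul_eq_mul]
      nlinarith
end

section
/- Assume the zero vector lies in the interval box and is weakly extremal, i.e., bl ≤ 0 ∧ 0 ≤ bu and there exists an index i with bl i = 0 or bu i = 0, and assume the minimum of the outcome function over Ω is attained (there exist b⁰ ∈ Set.Icc bl bu and x⁰ ∈ Opt b⁰ with r ⬝ᵥ x⁰ ≤ r ⬝ᵥ x for all x ∈ Ω). Then there exists a weakly extremal optimal scenario: some b* ∈ Set.Icc bl bu with b* i = bl i or b* i = bu i for some index i, and some x* ∈ Opt b* such that r ⬝ᵥ x* ≤ r ⬝ᵥ x for all x ∈ Ω. -/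
open Matrix

theorem exists_weakly_extremal_optimal_scenario_of_zero_weakly_extremal
    (m n : ℕ) (A : Matrix (Fin m) (Fin n) ℝ) (c r : Fin n → ℝ)
    (bl bu : Fin m → ℝ) (hb : bl ≤ bu)
    (hzero_in : bl ≤ 0 ∧ 0 ≤ bu)
    (hzero_we : ∃ i : Fin m, bl i = 0 ∨ bu i = 0)
    (hattained : ∃ b0 ∈ Set.Icc bl bu, ∃ x0 ∈ Opt A c b0,
      ∀ x ∈ Omega A c bl bu, r ⬝ᵥ x0 ≤ r ⬝ᵥ x) :
    ∃ bstar ∈ Set.Icc bl bu,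
      (∃ i : Fin m, bstar i = bl i ∨ bstar i = bu i) ∧
      ∃ xstar ∈ Opt A c bstar,
        ∀ x ∈ Omega A c bl bu, r ⬝ᵥ xstar ≤ r ⬝ᵥ x := by
  obtain ⟨b0, hb0, x0, hx0, hmin⟩ := hattained
  obtain ⟨⟨hvb0, hx0nn⟩, hopt⟩ := hx0
  set v : Fin m → ℝ := A.mulVec x0 with hv
  -- 0 ∈ Omega, hence r ⬝ x0 ≤ 0
  have hzeroOmega : (0 : Fin n → ℝ) ∈ Omega A c bl bu := by
    refine Set.mem_biUnion (Set.mem_Icc.mpr ⟨hzero_in.1, hzero_in.2⟩) ?_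
    refine ⟨⟨?_, le_refl _⟩, ?_⟩
    · simp [Feas, A.mulVec_zero]
    · rintro y ⟨hAy, hynn⟩
      have hy : x0 + y ∈ Feas A b0 := by
        refine ⟨?_, ?_⟩
        · rw [A.mulVec_add]
          intro j
          have := hAy j
          have := hvb0 j
          simp only [Pi.add_apply, Pi.zero_apply] at *
          linarith
        · intro k; have := hx0nn k; have := hynn k
          simp only [Pi.add_apply, Pi.zero_apply] at *
          linarith
      have := hopt _ hy
      rw [dotProduct_add] at this
      simp only [dotProduct_zero]
      linarith
  have hrx0 : r ⬝ᵥ x0 ≤ 0 := by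
    have := hmin 0 hzeroOmega
    simpa using this
  have hblb0 : bl ≤ b0 := hb0.1
  have hb0bu : b0 ≤ bu := hb0.2
  by_cases hcase : ∀ j, bl j < v j ∧ v j < bu j
  · -- scaling case
    obtain ⟨i, hi⟩ := hzero_we
    have hvi : v i ≠ 0 := by
      rcases hi with h | h
      · have := (hcase i).1; rw [h] at this; linarith
      · have := (hcase i).2; rw [h] at this; linarith
    set S : Finset (Fin m) := Finset.univ.filter (fun j => v j ≠ 0) with hS
    have hSne : S.Nonempty := ⟨i, by simp [hS, hvi]⟩
    set ρ : Fin m → ℝ := fun j => if 0 < v j then bu j / v j else bl j / v j with hρ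
    have hρgt : ∀ j ∈ S, (1:ℝ) < ρ j := by
      intro j hj
      have hvj : v j ≠ 0 := by simpa [hS] using hj
      rcases lt_or_gt_of_ne hvj with hneg | hpos
      · simp only [hρ, if_neg (not_lt.mpr hneg.le)]
        rw [lt_div_iff_of_neg hneg, one_mul]
        exact (hcase j).1
      · simp only [hρ, if_pos hpos]
        rw [lt_div_iff₀ hpos, one_mul]
        exact (hcase j).2
    set t : ℝ := S.inf' hSne ρ with ht
    have h1t : 1 < t := (Finset.lt_inf'_iff hSne).mpr hρgt
    have htpos : 0 < t := by linarith
    have htle : ∀ j ∈ S, t ≤ ρ j := fun j hj => Finset.inf'_le ρ hj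
    -- membership of t • v in the box
    have hbox : ∀ j, bl j ≤ t * v j ∧ t * v j ≤ bu j := by
      intro j
      rcases lt_trichotomy (v j) 0 with hneg | hzero | hpos
      · have hjS : j ∈ S := by simp [hS, ne_of_lt hneg]
        constructor
        · have := htle j hjS
          simp only [hρ, if_neg (not_lt.mpr hneg.le)] at this
          exact (le_div_iff_of_neg hneg).mp this
        · nlinarith [(hcase j).2]
      · rw [hzero]; simp only [mul_zero]
        exact ⟨hzero_in.1 j, hzero_in.2 j⟩
      · have hjS : j ∈ S := by simp [hS, ne_of_gt hpos]
        constructor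
        · nlinarith [(hcase j).1]
        · have := htle j hjS
          simp only [hρ, if_pos hpos] at this
          exact (le_div_iff₀ hpos).mp this
    refine ⟨t • v, Set.mem_Icc.mpr ⟨fun j => (hbox j).1, fun j => (hbox j).2⟩, ?_, t • x0, ?_, ?_⟩
    · -- extremality
      obtain ⟨j0, hj0S, hj0⟩ := Finset.exists_mem_eq_inf' hSne ρ
      have hvj0 : v j0 ≠ 0 := by simpa [hS] using hj0S
      refine ⟨j0, ?_⟩
      have h1 : t = ρ j0 := by rw [ht, hj0]
      rcases lt_or_gt_of_ne hvj0 with hneg | hpos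
      · left
        show t * v j0 = bl j0
        rw [h1]
        simp only [hρ, if_neg (not_lt.mpr hneg.le)]
        exact div_mul_cancel₀ _ hvj0
      · right
        show t * v j0 = bu j0
        rw [h1]
        simp only [hρ, if_pos hpos]
        exact div_mul_cancel₀ _ hvj0
    · -- t • x0 ∈ Opt A c (t • v)
      refine ⟨⟨?_, ?_⟩, ?_⟩
      · rw [A.mulVec_smul]
      · intro k; have := hx0nn k
        simp only [Pi.smul_apply, smul_eq_mul, Pi.zero_apply] at *
        nlinarith
      · rintro y ⟨hAy, hynn⟩
        have hz : t⁻¹ • y ∈ Feas A b0 := by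
          refine ⟨?_, ?_⟩
          · rw [A.mulVec_smul]
            intro j
            have h1 := hAy j
            have h2 := hvb0 j
            simp only [Pi.smul_apply, smul_eq_mul] at *
            rw [inv_mul_le_iff₀ htpos]
            calc A.mulVec y j ≤ t * v j := h1
              _ ≤ t * b0 j := by nlinarith
          · intro k; have := hynn k
            simp only [Pi.smul_apply, smul_eq_mul, Pi.zero_apply] at *
            positivity
        have := hopt _ hz
        rw [dotProduct_smul] at this
        rw [dotProduct_smul]
        simp only [smul_eq_mul] at *
        calc t * (c ⬝ᵥ x0) ≤ t * (t⁻¹ * (c ⬝ᵥ y)) := by nlinarith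
          _ = c ⬝ᵥ y := by field_simp
    · intro x hx
      have := hmin x hx
      rw [dotProduct_smul]
      simp only [smul_eq_mul]
      nlinarith
  · -- boundary case: some coordinate of v is outside (bl j, bu j)
    push_neg at hcase
    obtain ⟨j0, hj0⟩ := hcase
    set b' : Fin m → ℝ := fun j => max (v j) (bl j) with hb'
    have hb'le : b' ≤ b0 := fun j => max_le (hvb0 j) (hblb0 j)
    refine ⟨b', Set.mem_Icc.mpr ⟨fun j => le_max_right _ _,
        fun j => le_trans (hb'le j) (hb0bu j)⟩, ⟨j0, ?_⟩, x0, ⟨⟨?_, hx0nn⟩, ?_⟩, hmin⟩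
    · by_cases h : bl j0 < v j0
      · right
        have hge : bu j0 ≤ v j0 := hj0 h
        have : v j0 = bu j0 := le_antisymm (le_trans (hvb0 j0) (hb0bu j0)) hge
        simp [hb', this, max_eq_left (hb j0)]
      · left
        push_neg at h
        simp [hb', max_eq_right h]
    · intro j; exact le_max_left _ _
    · rintro y ⟨hAy, hynn⟩
      exact hopt y ⟨fun j => le_trans (hAy j) (hb'le j), hynn⟩
end

section
/- Suppose b* is the unique optimal scenario of the outcome minimization: b* ∈ Set.Icc bl bu, there exists x ∈ Opt b* with r ⬝ᵥ x ≤ r ⬝ᵥ x' for all x' ∈ Ω, and every b ∈ Set.Icc bl bu admitting some x ∈ Opt b with r ⬝ᵥ x ≤ r ⬝ᵥ x' for all x' ∈ Ω satisfies b = b*. If b* is a middle scenario, i.e., bl i < b* i and b* i < bu i for every index i, then b* = 0. -/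
open Matrix

theorem unique_middle_optimal_scenario_is_zero
    (m n : ℕ) (A : Matrix (Fin m) (Fin n) ℝ) (c r : Fin n → ℝ)
    (bl bu : Fin m → ℝ) (hb : bl ≤ bu)
    (bstar : Fin m → ℝ) (hbstar : bstar ∈ Set.Icc bl bu)
    (hopt : ∃ x ∈ Opt A c bstar,
      ∀ x' ∈ Omega A c bl bu, r ⬝ᵥ x ≤ r ⬝ᵥ x')
    (huniq : ∀ b ∈ Set.Icc bl bu,
      (∃ x ∈ Opt A c b, ∀ x' ∈ Omega A c bl bu, r ⬝ᵥ x ≤ r ⬝ᵥ x') → b = bstar)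
    (hmiddle : ∀ i : Fin m, bl i < bstar i ∧ bstar i < bu i) :
    bstar = 0 := by
  rcases Nat.eq_zero_or_pos m with hm | hm
  · subst hm; funext i; exact absurd i.2 (by simp)
  obtain ⟨x, hxopt, hxmin⟩ := hopt
  obtain ⟨hxfeas, hxle⟩ := hxopt
  obtain ⟨hxA, hxpos⟩ := hxfeas
  -- choose ε > 0 small so that scaling bstar by 1 ± ε stays in [bl, bu]
  have hne : (Finset.univ : Finset (Fin m)).Nonempty := by
    exact Finset.univ_nonempty_iff.mpr ⟨⟨0, hm⟩⟩
  set g : Fin m → ℝ := fun i => min (bstar i - bl i) (bu i - bstar i) / (|bstar i| + 1)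
    with hg
  have hgpos : ∀ i, 0 < g i := by
    intro i
    apply div_pos
    · exact lt_min (by linarith [(hmiddle i).1]) (by linarith [(hmiddle i).2])
    · positivity
  set δ : ℝ := Finset.univ.inf' hne g with hδ
  have hδpos : 0 < δ := by
    rw [hδ, Finset.lt_inf'_iff]
    intro i _; exact hgpos i
  set ε : ℝ := min δ (1/2) with hε
  have hεpos : 0 < ε := lt_min hδpos (by norm_num)
  have hεhalf : ε ≤ 1/2 := min_le_right _ _
  have hεδ : ∀ i, ε ≤ g i := fun i =>
    le_trans (min_le_left _ _) (Finset.inf'_le _ (Finset.mem_univ i))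
  set s : ℝ := if 0 ≤ r ⬝ᵥ x then -1 else 1 with hs
  have hsabs : |s| = 1 := by rw [hs]; split <;> simp
  set t : ℝ := 1 + s * ε with ht
  have htpos : 0 < t := by
    have h1 : -ε ≤ s * ε := by rw [hs]; split <;> nlinarith
    rw [ht]; linarith
  have htne : t ≠ 1 := by
    rw [ht, hs]
    split <;> intro h <;> nlinarith
  -- the scaled scenario is in the interval
  have hbt : t • bstar ∈ Set.Icc bl bu := by
    constructor <;> intro i
    all_goals
      have hgi := hgpos i
      have hεi := hεδ i
      have habs : |t * bstar i - bstar i| ≤ ε * |bstar i| := by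
        have : t * bstar i - bstar i = s * ε * bstar i := by rw [ht]; ring
        rw [this, abs_mul, abs_mul, hsabs, one_mul, abs_of_pos hεpos]
      have hbound : ε * |bstar i| ≤ min (bstar i - bl i) (bu i - bstar i) := by
        have h1 : ε * (|bstar i| + 1) ≤ g i * (|bstar i| + 1) := by
          apply mul_le_mul_of_nonneg_right hεi; positivity
        have h2 : g i * (|bstar i| + 1) = min (bstar i - bl i) (bu i - bstar i) := by
          rw [hg]; field_simp
        nlinarith [abs_nonneg (bstar i), hεpos]
      have h3 := abs_le.mp habs
      have h4 := min_le_left (bstar i - bl i) (bu i - bstar i)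
      have h5 := min_le_right (bstar i - bl i) (bu i - bstar i)
      simp only [Pi.smul_apply, smul_eq_mul]
    · linarith
    · linarith
  -- t • x is optimal for t • bstar
  have hfeas : t • x ∈ Feas A (t • bstar) := by
    constructor
    · rw [A.mulVec_smul]
      intro i
      simp only [Pi.smul_apply, smul_eq_mul]
      exact mul_le_mul_of_nonneg_left (hxA i) htpos.le
    · intro i
      simp only [Pi.smul_apply, smul_eq_mul, Pi.zero_apply]
      exact mul_nonneg htpos.le (hxpos i)
  have hoptt : t • x ∈ Opt A c (t • bstar) := by
    refine ⟨hfeas, fun y hy => ?_⟩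
    have hy' : t⁻¹ • y ∈ Feas A bstar := by
      obtain ⟨hyA, hypos⟩ := hy
      constructor
      · rw [A.mulVec_smul]
        intro i
        have := hyA i
        simp only [Pi.smul_apply, smul_eq_mul] at this ⊢
        rw [inv_mul_le_iff₀ htpos]
        linarith [this]
      · intro i
        simp only [Pi.smul_apply, smul_eq_mul, Pi.zero_apply]
        exact mul_nonneg (inv_nonneg.mpr htpos.le) (hypos i)
    have h1 := hxle _ hy'
    rw [dotProduct_smul, smul_eq_mul] at h1
    rw [dotProduct_smul, smul_eq_mul]
    rw [le_inv_mul_iff₀ htpos] at h1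
    linarith [h1]
  -- t • x still minimizes r over Omega
  have hrt : r ⬝ᵥ (t • x) ≤ r ⬝ᵥ x := by
    rw [dotProduct_smul, smul_eq_mul]
    have : (t - 1) * (r ⬝ᵥ x) ≤ 0 := by
      rw [ht, hs]
      split
      · next h => nlinarith
      · next h => nlinarith [not_le.mp h]
    nlinarith
  have := huniq (t • bstar) hbt ⟨t • x, hoptt, fun x' hx' => le_trans hrt (hxmin x' hx')⟩
  funext i
  have hi := congrFun this i
  simp only [Pi.smul_apply, smul_eq_mul] at hi
  have : (t - 1) * bstar i = 0 := by linarith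
  rcases mul_eq_zero.mp this with h | h
  · exact absurd (by linarith : t = 1) htne
  · simpa using h
end

section
/- Let M : Matrix (Fin m) (Fin m) ℝ be invertible and let P = {b : Fin m → ℝ | bl ≤ b ∧ b ≤ bu ∧ 0 ≤ M.mulVec b}. If b* is an extreme point of P (b* ∈ Set.extremePoints ℝ P) and bl i < b* i and b* i < bu i for every index i, then b* = 0. (Consequently, any extreme-point optimal scenario of the scenario LP over P_B that is a middle scenario must be the zero vector.) -/
/-!
A middle scenario `b*` lies in the interior of the box `bl ≤ b ≤ bu`, so `t • b*` stays in the
box for `t` near `1`; and `t • b*` stays in the cone `0 ≤ M *ᵥ b` for every `t ≥ 0`. Thus `b*` is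
the midpoint of `(1 - ε) • b*` and `(1 + ε) • b*`, both in `P`, and extremality forces
`(1 - ε) • b* = b*`, i.e. `b* = 0`.
-/

open Matrix Filter Topology

section ExtremePoints

variable {𝕜 E : Type*} [Field 𝕜] [LinearOrder 𝕜] [IsStrictOrderedRing 𝕜]
  [AddCommGroup E] [Module 𝕜 E]

theorem mem_openSegment_smul_self {a b : 𝕜} (ha : a < 1) (hb : 1 < b) (x : E) :
    x ∈ openSegment 𝕜 (a • x) (b • x) := by
  have h := Set.mem_image_of_mem (LinearMap.toSpanSingleton 𝕜 E x).toAffineMap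
    (Ioo_subset_openSegment ⟨ha, hb⟩ : (1 : 𝕜) ∈ openSegment 𝕜 a b)
  rw [image_openSegment] at h
  simpa only [LinearMap.coe_toAffineMap, LinearMap.toSpanSingleton_apply, one_smul] using h

theorem eq_zero_of_mem_extremePoints_of_smul_mem {S : Set E} {x : E}
    (hx : x ∈ S.extremePoints 𝕜) {a b : 𝕜} (ha : a < 1) (hb : 1 < b)
    (hax : a • x ∈ S) (hbx : b • x ∈ S) : x = 0 := by
  have hxa : a • x = x := hx.2 hax hbx (mem_openSegment_smul_self ha hb x)
  have : (a - 1) • x = 0 := by rw [sub_smul, one_smul, hxa, sub_self]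
  exact (smul_eq_zero.1 this).resolve_left (sub_ne_zero.2 ha.ne)

end ExtremePoints

theorem eq_zero_of_mem_extremePoints_of_eventually_smul_mem {E : Type*} [AddCommGroup E]
    [Module ℝ E] {S : Set E} {x : E} (hx : x ∈ S.extremePoints ℝ)
    (h : ∀ᶠ t in 𝓝 (1 : ℝ), t • x ∈ S) : x = 0 := by
  obtain ⟨a, hax, ha⟩ := ((h.filter_mono nhdsWithin_le_nhds).and
    (self_mem_nhdsWithin : Set.Iio (1 : ℝ) ∈ 𝓝[<] 1)).exists
  obtain ⟨b, hbx, hb⟩ := ((h.filter_mono nhdsWithin_le_nhds).and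
    (self_mem_nhdsWithin : Set.Ioi (1 : ℝ) ∈ 𝓝[>] 1)).exists
  exact eq_zero_of_mem_extremePoints_of_smul_mem hx ha hb hax hbx

theorem eventually_smul_mem_Icc_of_forall_mem_Ioo {ι : Type*} [Finite ι] {l u x : ι → ℝ}
    (hx : ∀ i, l i < x i ∧ x i < u i) : ∀ᶠ t in 𝓝 (1 : ℝ), l ≤ t • x ∧ t • x ≤ u := by
  have hopen : Set.univ.pi (fun i => Set.Ioo (l i) (u i)) ∈ 𝓝 x :=
    (isOpen_set_pi Set.finite_univ fun _ _ => isOpen_Ioo).mem_nhds fun i _ => hx i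
  have hcont : Tendsto (fun t : ℝ => t • x) (𝓝 1) (𝓝 x) := by
    simpa using (tendsto_id (x := 𝓝 (1 : ℝ))).smul_const x
  filter_upwards [hcont hopen] with t ht
  exact ⟨fun i => (ht i trivial).1.le, fun i => (ht i trivial).2.le⟩

theorem middle_extreme_point_of_scenario_polyhedron_is_zero_general
    (m : ℕ) (bl bu : Fin m → ℝ)
    (M : Matrix (Fin m) (Fin m) ℝ)
    (bstar : Fin m → ℝ)
    (hext : bstar ∈ Set.extremePoints ℝ
      {b : Fin m → ℝ | bl ≤ b ∧ b ≤ bu ∧ 0 ≤ M.mulVec b})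
    (hmiddle : ∀ i : Fin m, bl i < bstar i ∧ bstar i < bu i) :
    bstar = 0 := by
  refine eq_zero_of_mem_extremePoints_of_eventually_smul_mem hext ?_
  filter_upwards [eventually_smul_mem_Icc_of_forall_mem_Ioo hmiddle,
    eventually_gt_nhds zero_lt_one] with t ⟨hl, hu⟩ ht
  exact ⟨hl, hu, by rw [mulVec_smul]; exact smul_nonneg ht.le hext.1.2.2⟩

theorem middle_extreme_point_of_scenario_polyhedron_is_zero
    (m : ℕ) (bl bu : Fin m → ℝ) (hb : bl ≤ bu)
    (M : Matrix (Fin m) (Fin m) ℝ) (hM : IsUnit M.det)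
    (bstar : Fin m → ℝ)
    (hext : bstar ∈ Set.extremePoints ℝ
      {b : Fin m → ℝ | bl ≤ b ∧ b ≤ bu ∧ 0 ≤ M.mulVec b})
    (hmiddle : ∀ i : Fin m, bl i < bstar i ∧ bstar i < bu i) :
    bstar = 0 :=
  middle_extreme_point_of_scenario_polyhedron_is_zero_general m bl bu M bstar hext hmiddle
end

section
/- Let M : Matrix (Fin m) (Fin m) ℝ be invertible and let P = {b : Fin m → ℝ | bl ≤ b ∧ b ≤ bu ∧ 0 ≤ M.mulVec b}. If b* is an extreme point of P (b* ∈ Set.extremePoints ℝ P) and the non-degeneracy condition 0 < (M.mulVec b*) i holds for every index i, then b* is strongly extremal: for every index i, b* i = bl i or b* i = bu i. -/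
/-!
If some coordinate `b* i` lay strictly between `bl i` and `bu i`, then moving `b*` by `±t` along
the `i`-th coordinate axis would keep it in `P` for all small `t`: the other box constraints are
untouched, and the strict inequalities `0 < (M *ᵥ b*) k` survive small perturbations. So `b*`
would be the midpoint of two distinct points of `P`.
-/

open Matrix Filter Topology

section ExtremePoints

variable {E : Type*} [AddCommGroup E] [Module ℝ E] {A : Set E} {x v : E}

theorem eq_zero_of_mem_extremePoints_of_add_mem_of_sub_mem (hx : x ∈ A.extremePoints ℝ)
    (hadd : x + v ∈ A) (hsub : x - v ∈ A) : v = 0 := by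
  have hseg : x ∈ openSegment ℝ (x + v) (x - v) :=
    ⟨1 / 2, 1 / 2, by norm_num, by norm_num, by norm_num, by module⟩
  simpa using hx.2 hadd hsub hseg

theorem eq_zero_of_mem_extremePoints_of_eventually_add_smul_mem (hx : x ∈ A.extremePoints ℝ)
    (h : ∀ᶠ t : ℝ in 𝓝 0, x + t • v ∈ A) : v = 0 := by
  have hneg : ∀ᶠ t : ℝ in 𝓝 0, x + (-t) • v ∈ A :=
    (continuous_neg.tendsto' 0 0 neg_zero).eventually h
  obtain ⟨t, ht, hadd, hsub⟩ : ∃ t : ℝ, 0 < t ∧ x + t • v ∈ A ∧ x + (-t) • v ∈ A :=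
    ((eventually_mem_nhdsWithin (s := Set.Ioi 0) (a := 0)).and
      ((h.and hneg).filter_mono nhdsWithin_le_nhds)).exists
  have htv : t • v = 0 :=
    eq_zero_of_mem_extremePoints_of_add_mem_of_sub_mem hx hadd
      (by simpa [sub_eq_add_neg] using hsub)
  exact (smul_eq_zero.1 htv).resolve_left ht.ne'

end ExtremePoints

section ScenarioPolyhedron

variable {ι κ : Type*} [Fintype ι]

def scenarioPolyhedron (bl bu : ι → ℝ) (M : Matrix κ ι ℝ) : Set (ι → ℝ) :=
  {b | bl ≤ b ∧ b ≤ bu ∧ 0 ≤ M *ᵥ b}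

variable [DecidableEq ι] {bl bu b : ι → ℝ} {M : Matrix κ ι ℝ} {i : ι}

theorem add_smul_single_mem_scenarioPolyhedron {t : ℝ} (hb : b ∈ scenarioPolyhedron bl bu M)
    (hl : bl i ≤ b i + t) (hu : b i + t ≤ bu i) (hM : ∀ k, 0 ≤ (M *ᵥ b) k + t * M k i) :
    b + t • Pi.single i 1 ∈ scenarioPolyhedron bl bu M := by
  obtain ⟨hbl, hbu, -⟩ := hb
  refine ⟨fun j => ?_, fun j => ?_, fun k => ?_⟩
  · by_cases hj : j = i
    · subst hj; simpa using hl
    · simpa [hj] using hbl j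
  · by_cases hj : j = i
    · subst hj; simpa using hu
    · simpa [hj] using hbu j
  · simpa [mulVec_add, mulVec_smul, mul_comm] using hM k

theorem eventually_add_smul_single_mem_scenarioPolyhedron [Finite κ]
    (hb : b ∈ scenarioPolyhedron bl bu M) (hli : bl i < b i) (hui : b i < bu i)
    (hM : ∀ k, 0 < (M *ᵥ b) k) :
    ∀ᶠ t : ℝ in 𝓝 0, b + t • Pi.single i 1 ∈ scenarioPolyhedron bl bu M := by
  have hshift : Tendsto (fun t : ℝ => b i + t) (𝓝 0) (𝓝 (b i)) := by
    simpa using (continuous_const_add (b i)).tendsto 0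
  have hmulVec (k : κ) :
      Tendsto (fun t : ℝ => (M *ᵥ b) k + t * M k i) (𝓝 0) (𝓝 ((M *ᵥ b) k)) := by
    simpa using ((continuous_mul_const (M k i)).const_add ((M *ᵥ b) k)).tendsto 0
  filter_upwards [hshift.eventually_const_lt hli, hshift.eventually_lt_const hui,
    eventually_all.2 fun k => (hmulVec k).eventually_const_lt (hM k)] with t hl hu hMt
  exact add_smul_single_mem_scenarioPolyhedron hb hl.le hu.le fun k => (hMt k).le

end ScenarioPolyhedron

theorem nondegenerate_extreme_point_is_strongly_extremal_general
    (m : ℕ) (bl bu : Fin m → ℝ)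
    (M : Matrix (Fin m) (Fin m) ℝ)
    (bstar : Fin m → ℝ)
    (hext : bstar ∈ Set.extremePoints ℝ
      {b : Fin m → ℝ | bl ≤ b ∧ b ≤ bu ∧ 0 ≤ M.mulVec b})
    (hnondeg : ∀ i : Fin m, 0 < M.mulVec bstar i) :
    ∀ i : Fin m, bstar i = bl i ∨ bstar i = bu i := by
  intro i
  by_contra! hinterior
  replace hext : bstar ∈ (scenarioPolyhedron bl bu M).extremePoints ℝ := hext
  have hmem := hext.1
  have hli : bl i < bstar i := (hmem.1 i).lt_of_ne' hinterior.1
  have hui : bstar i < bu i := (hmem.2.1 i).lt_of_ne hinterior.2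
  have hev := eventually_add_smul_single_mem_scenarioPolyhedron hmem hli hui hnondeg
  have hsingle := eq_zero_of_mem_extremePoints_of_eventually_add_smul_mem hext hev
  simp at hsingle

theorem nondegenerate_extreme_point_is_strongly_extremal
    (m : ℕ) (bl bu : Fin m → ℝ) (hb : bl ≤ bu)
    (M : Matrix (Fin m) (Fin m) ℝ) (hM : IsUnit M.det)
    (bstar : Fin m → ℝ)
    (hext : bstar ∈ Set.extremePoints ℝ
      {b : Fin m → ℝ | bl ≤ b ∧ b ≤ bu ∧ 0 ≤ M.mulVec b})
    (hnondeg : ∀ i : Fin m, 0 < M.mulVec bstar i) :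
    ∀ i : Fin m, bstar i = bl i ∨ bstar i = bu i :=
  nondegenerate_extreme_point_is_strongly_extremal_general m bl bu M bstar hext hnondeg
end

section
/- A point x : Fin n → ℝ belongs to Ω if and only if there exist a scenario b with bl ≤ b ≤ bu and a dual vector y : Fin m → ℝ such that A.mulVec x ≤ b, 0 ≤ x, Aᵀ.mulVec y ≤ c, y ≤ 0, and c ⬝ᵥ x = b ⬝ᵥ y (where Aᵀ = A.transpose). That is, the strong-duality system (15) exactly characterizes the optimal set Ω of the interval LP. -/
open Matrix

/-!
Membership in `Omega` means optimality for some scenario `b ∈ [bl, bu]`, so the theorem is LP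
strong duality for each scenario. Weak duality gives one direction. For the other, Farkas' lemma
applied to the system `Aᵀ y ≤ c`, `y ≤ 0`, `c ⬝ᵥ x ≤ b ⬝ᵥ y` either produces the dual certificate,
or a pair `d ≥ 0`, `t ≥ 0` with `A d ≤ t b` and `c ⬝ᵥ d < t (c ⬝ᵥ x)`; but then `(x + d) / (1 + t)`
is feasible and strictly better than `x`.

Farkas' lemma is hyperplane separation from the cone `{M z | z ≥ 0}`, which is closed by the conic
Carathéodory theorem: it is a finite union of images of orthants under injective linear maps.
-/

open Finset

section Caratheodory
variable {ι E : Type*} [AddCommGroup E] [Module ℝ E]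

theorem exists_erase_nonneg_sum_smul_eq [DecidableEq ι] {v : ι → E} {s : Finset ι}
    (hs : ¬LinearIndepOn ℝ v s) {a : ι → ℝ} (ha : ∀ i ∈ s, 0 ≤ a i) :
    ∃ i₀ ∈ s, ∃ a' : ι → ℝ, (∀ i ∈ s.erase i₀, 0 ≤ a' i) ∧
      ∑ i ∈ s.erase i₀, a' i • v i = ∑ i ∈ s, a i • v i := by
  obtain ⟨f, hf, hpos⟩ : ∃ f : ι → ℝ, ∑ i ∈ s, f i • v i = 0 ∧ ∃ i ∈ s, 0 < f i := by
    obtain ⟨f, hf, i, hi, hfi⟩ := not_linearIndepOn_finset_iff.mp hs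
    rcases hfi.lt_or_gt with hneg | hpos
    · exact ⟨-f, by simp [hf], i, hi, by simpa⟩
    · exact ⟨f, hf, i, hi, hpos⟩
  -- Move along `-f` until the first coordinate of `a` hits zero.
  obtain ⟨i₀, hi₀, hmin⟩ := ((s.filter (0 < f ·)).exists_min_image (fun i => a i / f i)
    (by simpa [Finset.Nonempty] using hpos))
  rw [mem_filter] at hi₀
  set t := a i₀ / f i₀
  have ht : 0 ≤ t := div_nonneg (ha i₀ hi₀.1) hi₀.2.le
  have ha' : ∀ i ∈ s, 0 ≤ a i - t * f i := by
    intro i hi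
    rcases le_or_gt (f i) 0 with hfi | hfi
    · nlinarith [ha i hi]
    · have := hmin i (mem_filter.mpr ⟨hi, hfi⟩)
      rw [le_div_iff₀ hfi] at this
      linarith
  refine ⟨i₀, hi₀.1, fun i => a i - t * f i, fun i hi => ha' i (mem_of_mem_erase hi), ?_⟩
  have hzero : a i₀ - t * f i₀ = 0 := by simp [t, hi₀.2.ne']
  rw [sum_erase _ (by simp [hzero]), ← sub_zero (∑ i ∈ s, a i • v i), ← smul_zero t, ← hf,
    smul_sum, ← sum_sub_distrib]
  simp only [sub_smul, mul_smul]

theorem exists_linearIndepOn_nonneg_sum_smul_eq [DecidableEq ι] (v : ι → E) (s : Finset ι)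
    {a : ι → ℝ} (ha : ∀ i ∈ s, 0 ≤ a i) :
    ∃ t ⊆ s, LinearIndepOn ℝ v t ∧ ∃ a' : ι → ℝ, (∀ i ∈ t, 0 ≤ a' i) ∧
      ∑ i ∈ t, a' i • v i = ∑ i ∈ s, a i • v i := by
  induction s using Finset.strongInduction generalizing a with
  | H s ih =>
    by_cases hs : LinearIndepOn ℝ v s
    · exact ⟨s, subset_rfl, hs, a, ha, rfl⟩
    obtain ⟨i₀, hi₀, a', ha', hsum⟩ := exists_erase_nonneg_sum_smul_eq hs ha
    obtain ⟨t, hts, ht, a'', ha'', hsum'⟩ := ih _ (erase_ssubset hi₀) ha'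
    exact ⟨t, hts.trans (erase_subset _ _), ht, a'', ha'', hsum'.trans hsum⟩

theorem isClosed_image_linearCombination_nonneg [Fintype ι] [TopologicalSpace E]
    [IsTopologicalAddGroup E] [ContinuousSMul ℝ E] [T2Space E] (v : ι → E) :
    IsClosed (Fintype.linearCombination ℝ v '' Set.Ici 0) := by
  classical
  have hunion : Fintype.linearCombination ℝ v '' Set.Ici 0 =
      ⋃ t ∈ {t : Finset ι | LinearIndepOn ℝ v t},
        Fintype.linearCombination ℝ (fun i : t => v i) '' {b | 0 ≤ b} := by
    ext x
    simp only [Set.mem_image, Set.mem_iUnion, Set.mem_Ici, Set.mem_ofPred_eq,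
      Fintype.linearCombination_apply]
    constructor
    · rintro ⟨a, ha, rfl⟩
      obtain ⟨t, -, ht, a', ha', hsum⟩ :=
        exists_linearIndepOn_nonneg_sum_smul_eq v univ fun i _ => ha i
      exact ⟨t, ht, fun i => a' i, fun i => ha' i i.2,
        (sum_coe_sort t fun i => a' i • v i).trans hsum⟩
    · rintro ⟨t, -, b, hb, rfl⟩
      refine ⟨fun i => if h : i ∈ t then b ⟨i, h⟩ else 0, fun i => ?_, ?_⟩
      · dsimp only
        split_ifs
        exacts [hb _, le_rfl]
      · rw [← sum_subset (subset_univ t) fun i _ hi => by simp [hi], ← sum_coe_sort t]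
        simp
  rw [hunion]
  refine (Set.toFinite _).isClosed_biUnion fun t ht => ?_
  have hinj : LinearMap.ker (Fintype.linearCombination ℝ (fun i : t => v i)) = ⊥ :=
    LinearMap.ker_eq_bot.mpr (linearIndependent_iff_injective_fintypeLinearCombination.mp ht)
  exact (LinearMap.isClosedEmbedding_of_injective hinj).isClosedMap _ isClosed_Ici
end Caratheodory

section Farkas
variable {ι κ : Type*} [Fintype ι] [Fintype κ]

theorem exists_nonneg_mulVec_eq_or_exists_vecMul_nonneg (M : Matrix κ ι ℝ) (w : κ → ℝ) :
    (∃ z, 0 ≤ z ∧ M *ᵥ z = w) ∨ ∃ y, 0 ≤ y ᵥ* M ∧ y ⬝ᵥ w < 0 := by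
  classical
  refine or_iff_not_imp_left.mpr fun hw => ?_
  have hM : M.mulVecLin = Fintype.linearCombination ℝ (fun j => Mᵀ j) := by
    ext z k
    simp [Fintype.linearCombination_apply, mulVec, dotProduct, mul_comm]
  let C : ProperCone ℝ (κ → ℝ) :=
    ⟨(PointedCone.positive ℝ (ι → ℝ)).map M.mulVecLin, by
      simpa [hM] using isClosed_image_linearCombination_nonneg (fun j => Mᵀ j)⟩
  obtain ⟨f, hfC, hfw⟩ := C.hyperplane_separation_point (x₀ := w) (by simpa [C] using hw)
  have hf : ∀ x, f x = (fun k => f (Pi.single k 1)) ⬝ᵥ x := by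
    intro x
    conv_lhs => rw [pi_eq_sum_univ' x]
    simp [dotProduct, mul_comm]
  refine ⟨fun k => f (Pi.single k 1), fun j => ?_, by rwa [← hf]⟩
  have := hfC (M *ᵥ Pi.single j 1) ⟨Pi.single j 1, Pi.single_nonneg.2 zero_le_one, rfl⟩
  rwa [hf, dotProduct_mulVec, dotProduct_single_one] at this

theorem exists_nonneg_mulVec_le_or_exists_nonneg_vecMul_nonneg (M : Matrix κ ι ℝ) (w : κ → ℝ) :
    (∃ z, 0 ≤ z ∧ M *ᵥ z ≤ w) ∨ ∃ y, 0 ≤ y ∧ 0 ≤ y ᵥ* M ∧ y ⬝ᵥ w < 0 := by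
  classical
  rcases exists_nonneg_mulVec_eq_or_exists_vecMul_nonneg (fromCols M (1 : Matrix κ κ ℝ)) w with
    ⟨z, hz, hMz⟩ | ⟨y, hy, hyw⟩
  · refine .inl ⟨z ∘ Sum.inl, fun j => hz _, ?_⟩
    rw [← hMz, fromCols_mulVec, one_mulVec]
    exact le_add_of_nonneg_right fun k => hz _
  · rw [vecMul_fromCols, vecMul_one] at hy
    exact .inr ⟨y, fun k => hy (.inr k), fun j => hy (.inl j), hyw⟩
end Farkas

section LinearProgram
variable {m n : ℕ} {A : Matrix (Fin m) (Fin n) ℝ} {b : Fin m → ℝ} {c x : Fin n → ℝ}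
  {y : Fin m → ℝ}

theorem dotProduct_le_of_mem_Feas (hx : x ∈ Feas A b) (hy : Aᵀ *ᵥ y ≤ c) (hy₀ : y ≤ 0) :
    b ⬝ᵥ y ≤ c ⬝ᵥ x :=
  calc b ⬝ᵥ y = -(b ⬝ᵥ -y) := by simp
    _ ≤ -(A *ᵥ x ⬝ᵥ -y) :=
      neg_le_neg (dotProduct_le_dotProduct_of_nonneg_right hx.1 (neg_nonneg.2 hy₀))
    _ = x ⬝ᵥ Aᵀ *ᵥ y := by simp [mulVec_transpose, dotProduct_mulVec, dotProduct_comm]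
    _ ≤ x ⬝ᵥ c := dotProduct_le_dotProduct_of_nonneg_left hy hx.2
    _ = c ⬝ᵥ x := dotProduct_comm _ _

theorem mem_Opt_of_dotProduct_eq (hx : x ∈ Feas A b) (hy : Aᵀ *ᵥ y ≤ c) (hy₀ : y ≤ 0)
    (hxy : c ⬝ᵥ x = b ⬝ᵥ y) : x ∈ Opt A c b :=
  ⟨hx, fun _ hz => hxy ▸ dotProduct_le_of_mem_Feas hz hy hy₀⟩

theorem mul_dotProduct_le_of_mem_Opt (hx : x ∈ Opt A c b) {d : Fin n → ℝ} {t : ℝ} (hd : 0 ≤ d)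
    (ht : 0 ≤ t) (hAd : A *ᵥ d ≤ t • b) : t * (c ⬝ᵥ x) ≤ c ⬝ᵥ d := by
  have ht₁ : 0 < 1 + t := by linarith
  have hfeas : (1 + t)⁻¹ • (x + d) ∈ Feas A b := by
    refine ⟨?_, smul_nonneg (inv_nonneg.2 ht₁.le) (add_nonneg hx.1.2 hd)⟩
    rw [mulVec_smul, mulVec_add, inv_smul_le_iff_of_pos ht₁, add_smul, one_smul]
    exact add_le_add hx.1.1 hAd
  have := hx.2 _ hfeas
  rw [dotProduct_smul, dotProduct_add, smul_eq_mul, le_inv_mul_iff₀ ht₁] at this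
  linarith

theorem exists_dual_of_mem_Opt (hx : x ∈ Opt A c b) :
    ∃ y, Aᵀ *ᵥ y ≤ c ∧ y ≤ 0 ∧ c ⬝ᵥ x = b ⬝ᵥ y := by
  -- `M z ≤ w` is the system `Aᵀ y ≤ c`, `c ⬝ᵥ x ≤ b ⬝ᵥ y` for `y = -z`.
  set M := fromRows (-Aᵀ) (replicateRow Unit b)
  set w : Fin n ⊕ Unit → ℝ := Sum.elim c fun _ => -(c ⬝ᵥ x)
  have hM : ∀ z, M *ᵥ z = Sum.elim (-(Aᵀ *ᵥ z)) fun _ => b ⬝ᵥ z := fun z => by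
    rw [fromRows_mulVec, neg_mulVec]; rfl
  have hMt : ∀ u, u ᵥ* M = u (.inr ()) • b - A *ᵥ (u ∘ Sum.inl) := fun u => by
    ext i
    simp [M, vecMul, mulVec, dotProduct, sub_eq_neg_add, mul_comm]
  have hw : ∀ u, u ⬝ᵥ w = (u ∘ Sum.inl) ⬝ᵥ c - u (.inr ()) * (c ⬝ᵥ x) := fun u => by
    simp [w, dotProduct, Fintype.sum_sum_type, sub_eq_add_neg]
  rcases exists_nonneg_mulVec_le_or_exists_nonneg_vecMul_nonneg M w with
    ⟨z, hz, hMz⟩ | ⟨u, hu, huM, huw⟩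
  · have hAz : Aᵀ *ᵥ -z ≤ c := fun j => by simpa [hM, w, mulVec_neg] using hMz (.inl j)
    have hbz : c ⬝ᵥ x ≤ b ⬝ᵥ -z := by simpa [hM, w, le_neg] using hMz (.inr ())
    exact ⟨-z, hAz, neg_nonpos.2 hz, le_antisymm hbz
      (dotProduct_le_of_mem_Feas hx.1 hAz (neg_nonpos.2 hz))⟩
  · rw [hMt, sub_nonneg] at huM
    have := mul_dotProduct_le_of_mem_Opt hx (d := u ∘ Sum.inl) (fun j => hu _) (hu _) huM
    rw [hw, dotProduct_comm] at huw
    linarith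

theorem mem_Opt_iff_exists_dual :
    x ∈ Opt A c b ↔ x ∈ Feas A b ∧ ∃ y, Aᵀ *ᵥ y ≤ c ∧ y ≤ 0 ∧ c ⬝ᵥ x = b ⬝ᵥ y :=
  ⟨fun hx => ⟨hx.1, exists_dual_of_mem_Opt hx⟩,
    fun ⟨hx, _, hy, hy₀, hxy⟩ => mem_Opt_of_dotProduct_eq hx hy hy₀ hxy⟩

end LinearProgram

theorem strong_duality_characterization_of_optimal_set_general
    (m n : ℕ) (A : Matrix (Fin m) (Fin n) ℝ) (c : Fin n → ℝ)
    (bl bu : Fin m → ℝ) (x : Fin n → ℝ) :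
    x ∈ Omega A c bl bu ↔
      ∃ b : Fin m → ℝ, bl ≤ b ∧ b ≤ bu ∧
        ∃ y : Fin m → ℝ,
          A.mulVec x ≤ b ∧ 0 ≤ x ∧
          Aᵀ.mulVec y ≤ c ∧ y ≤ 0 ∧
          c ⬝ᵥ x = b ⬝ᵥ y := by
  simp only [Omega, Set.mem_iUnion, Set.mem_Icc, exists_prop, mem_Opt_iff_exists_dual]
  constructor
  · rintro ⟨b, ⟨hbl, hbu⟩, ⟨hAx, hx⟩, y, hy⟩
    exact ⟨b, hbl, hbu, y, hAx, hx, hy⟩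
  · rintro ⟨b, hbl, hbu, y, hAx, hx, hy⟩
    exact ⟨b, ⟨hbl, hbu⟩, ⟨hAx, hx⟩, y, hy⟩

theorem strong_duality_characterization_of_optimal_set
    (m n : ℕ) (A : Matrix (Fin m) (Fin n) ℝ) (c : Fin n → ℝ)
    (bl bu : Fin m → ℝ) (hb : bl ≤ bu) (x : Fin n → ℝ) :
    x ∈ Omega A c bl bu ↔
      ∃ b : Fin m → ℝ, bl ≤ b ∧ b ≤ bu ∧
        ∃ y : Fin m → ℝ,
          A.mulVec x ≤ b ∧ 0 ≤ x ∧
          Aᵀ.mulVec y ≤ c ∧ y ≤ 0 ∧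
          c ⬝ᵥ x = b ⬝ᵥ y :=
  strong_duality_characterization_of_optimal_set_general m n A c bl bu x
end

section
/- Assume a dual enclosure is available: for every b ∈ Set.Icc bl bu and every x ∈ Opt b there exists y : Fin m → ℝ with yl ≤ y ≤ yu, y ≤ 0, Aᵀ.mulVec y ≤ c, and c ⬝ᵥ x = b ⬝ᵥ y. Then every x ∈ Ω satisfies the McCormick super-set system (16): there exist b with bl ≤ b ≤ bu and y with yl ≤ y ≤ yu such that A.mulVec x ≤ b, 0 ≤ x, Aᵀ.mulVec y ≤ c, y ≤ 0, c ⬝ᵥ x ≤ yl ⬝ᵥ b + bu ⬝ᵥ y − bu ⬝ᵥ yl, c ⬝ᵥ x ≤ yu ⬝ᵥ b + bl ⬝ᵥ y − bl ⬝ᵥ yu, c ⬝ᵥ x ≥ yu ⬝ᵥ b + bu ⬝ᵥ y − bu ⬝ᵥ yu, and c ⬝ᵥ x ≥ yl ⬝ᵥ b + bl ⬝ᵥ y − bl ⬝ᵥ yl. In particular, Ω is contained in the x-projection of system (16), so the super-set method yields valid bounds: its minimum is a lower bound for f̲ and its maximum is an upper bound for f̄. -/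
open Matrix

open Matrix in
lemma dot_nonneg {m : ℕ} {p q s t : Fin m → ℝ} (h1 : p ≤ q) (h2 : s ≤ t) :
    0 ≤ (q - p) ⬝ᵥ (t - s) :=
  Finset.sum_nonneg fun i _ =>
    mul_nonneg (sub_nonneg.2 (h1 i)) (sub_nonneg.2 (h2 i))

theorem omega_subset_mccormick_superset
    (m n : ℕ) (A : Matrix (Fin m) (Fin n) ℝ) (c r : Fin n → ℝ)
    (bl bu yl yu : Fin m → ℝ) (hb : bl ≤ bu)
    (hdual : ∀ b ∈ Set.Icc bl bu, ∀ x ∈ Opt A c b,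
      ∃ y : Fin m → ℝ, yl ≤ y ∧ y ≤ yu ∧ y ≤ 0 ∧
        Aᵀ.mulVec y ≤ c ∧ c ⬝ᵥ x = b ⬝ᵥ y) :
    ∀ x ∈ Omega A c bl bu,
      ∃ b : Fin m → ℝ, bl ≤ b ∧ b ≤ bu ∧
        ∃ y : Fin m → ℝ, yl ≤ y ∧ y ≤ yu ∧
          A.mulVec x ≤ b ∧ 0 ≤ x ∧
          Aᵀ.mulVec y ≤ c ∧ y ≤ 0 ∧
          c ⬝ᵥ x ≤ yl ⬝ᵥ b + bu ⬝ᵥ y - bu ⬝ᵥ yl ∧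
          c ⬝ᵥ x ≤ yu ⬝ᵥ b + bl ⬝ᵥ y - bl ⬝ᵥ yu ∧
          yu ⬝ᵥ b + bu ⬝ᵥ y - bu ⬝ᵥ yu ≤ c ⬝ᵥ x ∧
          yl ⬝ᵥ b + bl ⬝ᵥ y - bl ⬝ᵥ yl ≤ c ⬝ᵥ x := by
  intro x hx
  obtain ⟨b, hbmem, hxOpt⟩ := by
    simpa [Omega, Set.mem_iUnion] using hx
  obtain ⟨hbl, hbu⟩ := hbmem
  obtain ⟨y, hyl, hyu, hy0, hAy, hcx⟩ := hdual b ⟨hbl, hbu⟩ x hxOpt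
  obtain ⟨⟨hAx, hx0⟩, _⟩ := hxOpt
  refine ⟨b, hbl, hbu, y, hyl, hyu, hAx, hx0, hAy, hy0, ?_, ?_, ?_, ?_⟩ <;>
  · have h1 := dot_nonneg hbu hyl
    have h2 := dot_nonneg hbl hyu
    have h3 := dot_nonneg hbu hyu
    have h4 := dot_nonneg hbl hyl
    simp only [sub_dotProduct, dotProduct_sub] at h1 h2 h3 h4
    rw [hcx]
    linarith [dotProduct_comm yl b, dotProduct_comm yu b]
end
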